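/- arXiv:2601.07150 — 4 statements merged into one kernel-verified Lean document; each statement's English description precedes it below -/
import Mathlib

section
/- Under the double Bezout identity, the image of the map v ↦ (Mv, Nv) equals the kernel of the map (u,y) ↦ -N̂u + M̂y. That is, I_G = K_G: a pair (u,y) satisfies -N̂u + M̂y = 0 if and only if there exists v with u = Mv and y = Nv. -/
/-! The second Bezout identity `[M -Ŷ; N X̂] [X Y; -N̂ M̂] = I` writes every pair `(u, y)` as
`(M v, N v) + (-Ŷ w, X̂ w)` with `v = X u + Y y` and `w = -N̂ u + M̂ y`, so `(u, y)` lies in the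
image of `(M, N)` as soon as `w = 0`. Conversely `N̂ M = M̂ N` puts that image inside the kernel. -/

section Bezout

variable {R : Type*} [CommRing R] {U Ys V W : Type*} [AddCommGroup U] [AddCommGroup Ys]
  [AddCommGroup V] [AddCommGroup W] [Module R U] [Module R Ys] [Module R V] [Module R W]
  {M : V →ₗ[R] U} {N : V →ₗ[R] Ys} {X : U →ₗ[R] V} {Yc : Ys →ₗ[R] V}
  {Mh : Ys →ₗ[R] W} {Nh : U →ₗ[R] W} {Xh : W →ₗ[R] Ys} {Yh : W →ₗ[R] U}

theorem bezout_reconstruct_fst (g11 : M ∘ₗ X + Yh ∘ₗ Nh = LinearMap.id)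
    (g12 : M ∘ₗ Yc - Yh ∘ₗ Mh = 0) (u : U) (y : Ys) :
    M (X u + Yc y) - Yh (-(Nh u) + Mh y) = u := by
  have hu := LinearMap.congr_fun g11 u
  have hy := LinearMap.congr_fun g12 y
  simp only [LinearMap.add_apply, LinearMap.sub_apply, LinearMap.comp_apply,
    LinearMap.id_apply, LinearMap.zero_apply] at hu hy
  simp only [map_add, map_neg]
  linear_combination (norm := abel) hu + hy

theorem bezout_reconstruct_snd (g21 : N ∘ₗ X - Xh ∘ₗ Nh = 0)
    (g22 : N ∘ₗ Yc + Xh ∘ₗ Mh = LinearMap.id) (u : U) (y : Ys) :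
    N (X u + Yc y) + Xh (-(Nh u) + Mh y) = y := by
  have hu := LinearMap.congr_fun g21 u
  have hy := LinearMap.congr_fun g22 y
  simp only [LinearMap.add_apply, LinearMap.sub_apply, LinearMap.comp_apply,
    LinearMap.id_apply, LinearMap.zero_apply] at hu hy
  simp only [map_add, map_neg]
  linear_combination (norm := abel) hu + hy

end Bezout

theorem stmt2_general {R : Type*} [CommRing R]
    {U Ys V W : Type*} [AddCommGroup U] [AddCommGroup Ys] [AddCommGroup V] [AddCommGroup W]
    [Module R U] [Module R Ys] [Module R V] [Module R W]
    (M : V →ₗ[R] U) (N : V →ₗ[R] Ys) (X : U →ₗ[R] V) (Yc : Ys →ₗ[R] V)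
    (Mh : Ys →ₗ[R] W) (Nh : U →ₗ[R] W) (Xh : W →ₗ[R] Ys) (Yh : W →ₗ[R] U)
    (h21 : -(Nh ∘ₗ M) + Mh ∘ₗ N = 0)
    (g11 : M ∘ₗ X + Yh ∘ₗ Nh = LinearMap.id)
    (g12 : M ∘ₗ Yc - Yh ∘ₗ Mh = 0)
    (g21 : N ∘ₗ X - Xh ∘ₗ Nh = 0)
    (g22 : N ∘ₗ Yc + Xh ∘ₗ Mh = LinearMap.id) :
    ∀ (u : U) (y : Ys), (-(Nh u) + Mh y = 0) ↔ ∃ v : V, u = M v ∧ y = N v := by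
  intro u y
  constructor
  · intro h
    have hu := bezout_reconstruct_fst g11 g12 u y
    have hy := bezout_reconstruct_snd g21 g22 u y
    rw [h, map_zero, sub_zero] at hu
    rw [h, map_zero, add_zero] at hy
    exact ⟨X u + Yc y, hu.symm, hy.symm⟩
  · rintro ⟨v, rfl, rfl⟩
    simpa using LinearMap.congr_fun h21 v

/-- I_G = K_G : the image of v ↦ (Mv, Nv) equals the kernel of (u,y) ↦ -Nhu + Mhy. -/
theorem stmt2 {R : Type*} [CommRing R]
    {U Ys V W : Type*} [AddCommGroup U] [AddCommGroup Ys] [AddCommGroup V] [AddCommGroup W]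
    [Module R U] [Module R Ys] [Module R V] [Module R W]
    (M : V →ₗ[R] U) (N : V →ₗ[R] Ys) (X : U →ₗ[R] V) (Yc : Ys →ₗ[R] V)
    (Mh : Ys →ₗ[R] W) (Nh : U →ₗ[R] W) (Xh : W →ₗ[R] Ys) (Yh : W →ₗ[R] U)
    (h11 : X ∘ₗ M + Yc ∘ₗ N = LinearMap.id)
    (h12 : -(X ∘ₗ Yh) + Yc ∘ₗ Xh = 0)
    (h21 : -(Nh ∘ₗ M) + Mh ∘ₗ N = 0)
    (h22 : Nh ∘ₗ Yh + Mh ∘ₗ Xh = LinearMap.id)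
    (g11 : M ∘ₗ X + Yh ∘ₗ Nh = LinearMap.id)
    (g12 : M ∘ₗ Yc - Yh ∘ₗ Mh = 0)
    (g21 : N ∘ₗ X - Xh ∘ₗ Nh = 0)
    (g22 : N ∘ₗ Yc + Xh ∘ₗ Mh = LinearMap.id) :
    ∀ (u : U) (y : Ys), (-(Nh u) + Mh y = 0) ↔ ∃ v : V, u = M v ∧ y = N v :=
  stmt2_general M N X Yc Mh Nh Xh Yh h21 g11 g12 g21 g22
end

section
/- Attack representation theorem: under the double Bezout identity, any pair (a_u, −a_y) can be written as (a_u, −a_y) = (M a_{ru}, N a_{ru}) + (−Ŷ a_{ry}, X̂ a_{ry}) with a_{ru} = X a_u − Y a_y and a_{ry} = −N̂ a_u − M̂ a_y, and this decomposition is the identity map applied via the Bezout factors. -/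
/-!
Stack the attack as `(a_u, -a_y)` and the Bezout factors as the block operators
`[[M, -Ŷ], [N, X̂]]` and `[[X, Y], [-N̂, M̂]]`. The second one sends `(a_u, -a_y)` to
`(a_ru, a_ry)`, and the Bezout identity `[[M, -Ŷ], [N, X̂]] ∘ [[X, Y], [-N̂, M̂]] = 1` is the
claimed decomposition.
-/

namespace LinearMap

variable {R : Type*} [Semiring R] {U₁ U₂ V₁ V₂ W₁ W₂ : Type*}
  [AddCommMonoid U₁] [AddCommMonoid U₂] [AddCommMonoid V₁] [AddCommMonoid V₂]
  [AddCommMonoid W₁] [AddCommMonoid W₂]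
  [Module R U₁] [Module R U₂] [Module R V₁] [Module R V₂] [Module R W₁] [Module R W₂]

/-- The operator `U₁ × U₂ → V₁ × V₂` with block matrix `[[A, B], [C, D]]`. -/
def blockMap (A : U₁ →ₗ[R] V₁) (B : U₂ →ₗ[R] V₁) (C : U₁ →ₗ[R] V₂) (D : U₂ →ₗ[R] V₂) :
    U₁ × U₂ →ₗ[R] V₁ × V₂ :=
  (A.coprod B).prod (C.coprod D)

@[simp]
theorem blockMap_apply (A : U₁ →ₗ[R] V₁) (B : U₂ →ₗ[R] V₁) (C : U₁ →ₗ[R] V₂)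
    (D : U₂ →ₗ[R] V₂) (x : U₁ × U₂) :
    blockMap A B C D x = (A x.1 + B x.2, C x.1 + D x.2) :=
  rfl

theorem blockMap_comp_blockMap (A : V₁ →ₗ[R] W₁) (B : V₂ →ₗ[R] W₁) (C : V₁ →ₗ[R] W₂)
    (D : V₂ →ₗ[R] W₂) (A' : U₁ →ₗ[R] V₁) (B' : U₂ →ₗ[R] V₁) (C' : U₁ →ₗ[R] V₂)
    (D' : U₂ →ₗ[R] V₂) :
    blockMap A B C D ∘ₗ blockMap A' B' C' D' =
      blockMap (A ∘ₗ A' + B ∘ₗ C') (A ∘ₗ B' + B ∘ₗ D') (C ∘ₗ A' + D ∘ₗ C')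
        (C ∘ₗ B' + D ∘ₗ D') := by
  ext x <;> simp only [comp_apply, blockMap_apply, add_apply, map_add] <;> abel

theorem blockMap_id_zero_zero_id :
    blockMap (LinearMap.id : U₁ →ₗ[R] U₁) 0 0 (LinearMap.id : U₂ →ₗ[R] U₂) = LinearMap.id := by
  ext x <;> simp

end LinearMap

open LinearMap in
theorem stmt8_general {R : Type*} [CommRing R]
    {U Ys V W : Type*} [AddCommGroup U] [AddCommGroup Ys] [AddCommGroup V] [AddCommGroup W]
    [Module R U] [Module R Ys] [Module R V] [Module R W]
    (M : V →ₗ[R] U) (N : V →ₗ[R] Ys) (X : U →ₗ[R] V) (Yc : Ys →ₗ[R] V)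
    (Mh : Ys →ₗ[R] W) (Nh : U →ₗ[R] W) (Xh : W →ₗ[R] Ys) (Yh : W →ₗ[R] U)
    (g11 : M ∘ₗ X + Yh ∘ₗ Nh = LinearMap.id)
    (g12 : M ∘ₗ Yc - Yh ∘ₗ Mh = 0)
    (g21 : N ∘ₗ X - Xh ∘ₗ Nh = 0)
    (g22 : N ∘ₗ Yc + Xh ∘ₗ Mh = LinearMap.id) :
    ∀ (a_u : U) (a_y : Ys),
      a_u = M (X a_u - Yc a_y) + -(Yh (-(Nh a_u) - Mh a_y)) ∧
      -a_y = N (X a_u - Yc a_y) + Xh (-(Nh a_u) - Mh a_y) := by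
  have bezout : blockMap M (-Yh) N Xh ∘ₗ blockMap X Yc (-Nh) Mh = LinearMap.id := by
    rw [blockMap_comp_blockMap, ← blockMap_id_zero_zero_id]
    simp only [neg_comp, comp_neg, neg_neg, ← sub_eq_add_neg, g11, g12, g21, g22]
  intro a_u a_y
  have h := congr($bezout (a_u, -a_y))
  simp only [comp_apply, blockMap_apply, id_apply, Prod.ext_iff, LinearMap.neg_apply, map_neg,
    ← sub_eq_add_neg] at h
  rw [← sub_eq_add_neg]
  exact ⟨h.1.symm, h.2.symm⟩

/-- Attack representation: (a_u, −a_y) decomposes via the Bezout factors with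
a_ru = X a_u − Y a_y and a_ry = −Nh a_u − Mh a_y. -/
theorem stmt8 {R : Type*} [CommRing R]
    {U Ys V W : Type*} [AddCommGroup U] [AddCommGroup Ys] [AddCommGroup V] [AddCommGroup W]
    [Module R U] [Module R Ys] [Module R V] [Module R W]
    (M : V →ₗ[R] U) (N : V →ₗ[R] Ys) (X : U →ₗ[R] V) (Yc : Ys →ₗ[R] V)
    (Mh : Ys →ₗ[R] W) (Nh : U →ₗ[R] W) (Xh : W →ₗ[R] Ys) (Yh : W →ₗ[R] U)
    (h11 : X ∘ₗ M + Yc ∘ₗ N = LinearMap.id)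
    (h12 : -(X ∘ₗ Yh) + Yc ∘ₗ Xh = 0)
    (h21 : -(Nh ∘ₗ M) + Mh ∘ₗ N = 0)
    (h22 : Nh ∘ₗ Yh + Mh ∘ₗ Xh = LinearMap.id)
    (g11 : M ∘ₗ X + Yh ∘ₗ Nh = LinearMap.id)
    (g12 : M ∘ₗ Yc - Yh ∘ₗ Mh = 0)
    (g21 : N ∘ₗ X - Xh ∘ₗ Nh = 0)
    (g22 : N ∘ₗ Yc + Xh ∘ₗ Mh = LinearMap.id) :
    ∀ (a_u : U) (a_y : Ys),
      a_u = M (X a_u - Yc a_y) + -(Yh (-(Nh a_u) - Mh a_y)) ∧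
      -a_y = N (X a_u - Yc a_y) + Xh (-(Nh a_u) - Mh a_y) :=
  stmt8_general M N X Yc Mh Nh Xh Yh g11 g12 g21 g22
end

section
/- Undetectability characterization (Theorem 4.6): a pair (a_u, −a_y) satisfies −N̂ a_u − M̂ a_y = 0 if and only if there exists ξ with a_u = M ξ and −a_y = N ξ; i.e., attacks are undetectable from the residual −N̂u + M̂y^a exactly when the attack pair lies in the image subspace I_G. -/
/-!
Write the right half of the double Bezout identity in block form,
`[M -Yh; N Xh] [X Yc; -Nh Mh] = I`. Any `p` with `[-Nh Mh] p = 0` is then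
`[M; N] [X Yc] p`, so it lies in the image of `[M; N]`; conversely `[-Nh Mh] [M; N] = 0`
is the coprimeness relation `Nh M = Mh N`. Apply this to `p = (a_u, -a_y)`.
-/

open LinearMap

section

variable {R : Type*} [Ring R] {U Ys V W : Type*} [AddCommGroup U] [AddCommGroup Ys]
  [AddCommGroup V] [AddCommGroup W] [Module R U] [Module R Ys] [Module R V] [Module R W]

theorem LinearMap.ker_le_range_of_comp_add_comp_eq_id {f : V →ₗ[R] U} {g : U →ₗ[R] V}
    {h : W →ₗ[R] U} {k : U →ₗ[R] W} (hfg : f ∘ₗ g + h ∘ₗ k = LinearMap.id) :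
    ker k ≤ range f := by
  intro p hp
  refine ⟨g p, ?_⟩
  simpa [mem_ker.mp hp] using congr($hfg p)

theorem prod_comp_coprod_add_eq_id (M : V →ₗ[R] U) (N : V →ₗ[R] Ys) (X : U →ₗ[R] V)
    (Yc : Ys →ₗ[R] V) (Mh : Ys →ₗ[R] W) (Nh : U →ₗ[R] W) (Xh : W →ₗ[R] Ys)
    (Yh : W →ₗ[R] U)
    (g11 : M ∘ₗ X + Yh ∘ₗ Nh = LinearMap.id) (g12 : M ∘ₗ Yc - Yh ∘ₗ Mh = 0)
    (g21 : N ∘ₗ X - Xh ∘ₗ Nh = 0) (g22 : N ∘ₗ Yc + Xh ∘ₗ Mh = LinearMap.id) :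
    M.prod N ∘ₗ X.coprod Yc + (-Yh).prod Xh ∘ₗ (-Nh).coprod Mh = LinearMap.id := by
  ext x
  · simpa using congr($g11 x)
  · simpa [sub_eq_add_neg] using congr($g21 x)
  · simpa [sub_eq_add_neg] using congr($g12 x)
  · simpa using congr($g22 x)

theorem ker_coprod_neg_eq_range_prod (M : V →ₗ[R] U) (N : V →ₗ[R] Ys) (X : U →ₗ[R] V)
    (Yc : Ys →ₗ[R] V) (Mh : Ys →ₗ[R] W) (Nh : U →ₗ[R] W) (Xh : W →ₗ[R] Ys)
    (Yh : W →ₗ[R] U) (h21 : -(Nh ∘ₗ M) + Mh ∘ₗ N = 0)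
    (g11 : M ∘ₗ X + Yh ∘ₗ Nh = LinearMap.id) (g12 : M ∘ₗ Yc - Yh ∘ₗ Mh = 0)
    (g21 : N ∘ₗ X - Xh ∘ₗ Nh = 0) (g22 : N ∘ₗ Yc + Xh ∘ₗ Mh = LinearMap.id) :
    ker ((-Nh).coprod Mh) = range (M.prod N) := by
  refine le_antisymm ?_ ?_
  · exact ker_le_range_of_comp_add_comp_eq_id
      (prod_comp_coprod_add_eq_id M N X Yc Mh Nh Xh Yh g11 g12 g21 g22)
  · rw [range_le_ker_iff, coprod_comp_prod, neg_comp, h21]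

end

theorem stmt9_general {R : Type*} [CommRing R]
    {U Ys V W : Type*} [AddCommGroup U] [AddCommGroup Ys] [AddCommGroup V] [AddCommGroup W]
    [Module R U] [Module R Ys] [Module R V] [Module R W]
    (M : V →ₗ[R] U) (N : V →ₗ[R] Ys) (X : U →ₗ[R] V) (Yc : Ys →ₗ[R] V)
    (Mh : Ys →ₗ[R] W) (Nh : U →ₗ[R] W) (Xh : W →ₗ[R] Ys) (Yh : W →ₗ[R] U)
    (h21 : -(Nh ∘ₗ M) + Mh ∘ₗ N = 0)
    (g11 : M ∘ₗ X + Yh ∘ₗ Nh = LinearMap.id)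
    (g12 : M ∘ₗ Yc - Yh ∘ₗ Mh = 0)
    (g21 : N ∘ₗ X - Xh ∘ₗ Nh = 0)
    (g22 : N ∘ₗ Yc + Xh ∘ₗ Mh = LinearMap.id) :
    ∀ (a_u : U) (a_y : Ys),
      (-(Nh a_u) - Mh a_y = 0) ↔ ∃ ξ : V, a_u = M ξ ∧ -a_y = N ξ := by
  intro a_u a_y
  have hker := SetLike.ext_iff.mp
    (ker_coprod_neg_eq_range_prod M N X Yc Mh Nh Xh Yh h21 g11 g12 g21 g22) (a_u, -a_y)
  simpa [sub_eq_add_neg, Prod.ext_iff, eq_comm] using hker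

/-- Undetectability characterization: −Nh a_u − Mh a_y = 0 iff (a_u, −a_y) lies in the
image subspace I_G. -/
theorem stmt9 {R : Type*} [CommRing R]
    {U Ys V W : Type*} [AddCommGroup U] [AddCommGroup Ys] [AddCommGroup V] [AddCommGroup W]
    [Module R U] [Module R Ys] [Module R V] [Module R W]
    (M : V →ₗ[R] U) (N : V →ₗ[R] Ys) (X : U →ₗ[R] V) (Yc : Ys →ₗ[R] V)
    (Mh : Ys →ₗ[R] W) (Nh : U →ₗ[R] W) (Xh : W →ₗ[R] Ys) (Yh : W →ₗ[R] U)
    (h11 : X ∘ₗ M + Yc ∘ₗ N = LinearMap.id)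
    (h12 : -(X ∘ₗ Yh) + Yc ∘ₗ Xh = 0)
    (h21 : -(Nh ∘ₗ M) + Mh ∘ₗ N = 0)
    (h22 : Nh ∘ₗ Yh + Mh ∘ₗ Xh = LinearMap.id)
    (g11 : M ∘ₗ X + Yh ∘ₗ Nh = LinearMap.id)
    (g12 : M ∘ₗ Yc - Yh ∘ₗ Mh = 0)
    (g21 : N ∘ₗ X - Xh ∘ₗ Nh = 0)
    (g22 : N ∘ₗ Yc + Xh ∘ₗ Mh = LinearMap.id) :
    ∀ (a_u : U) (a_y : Ys),
      (-(Nh a_u) - Mh a_y = 0) ↔ ∃ ξ : V, a_u = M ξ ∧ -a_y = N ξ :=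
  stmt9_general M N X Yc Mh Nh Xh Yh h21 g11 g12 g21 g22
end

section
/- Every actuable attack is detectable on the plant side: if the pair (a_u, −a_y) satisfies X a_u − Y a_y ≠ 0 then writing (a_u, −a_y) = (M, N)ξ₁ + (−Ŷ, X̂)ξ₂ via the Bezout coordinates, one has ξ₁ ≠ 0, and the input residual r_u = X u^a + Y y detects the attack (its value differs from the attack-free value v by exactly ξ₁). -/
/-!
The right-coprime half of the double Bezout identity,
`[M -Ŷ; N X̂] [X Y; -N̂ M̂] = 1`, says that every pair `(a, b)` is recovered from its Bezout
coordinates `ξ₁ = X a + Y b`, `ξ₂ = -N̂ a + M̂ b`. For the attack pair `(a_u, -a_y)` the first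
coordinate is `X a_u - Y a_y`, nonzero by actuability, and by linearity it is exactly the shift
of the input residual `X u + Y y`.
-/

namespace Bezout

variable {R : Type*} [Semiring R] {U Ys V W : Type*}
  [AddCommGroup U] [AddCommGroup Ys] [AddCommGroup V] [AddCommGroup W]
  [Module R U] [Module R Ys] [Module R V] [Module R W]
  (M : V →ₗ[R] U) (N : V →ₗ[R] Ys) (X : U →ₗ[R] V) (Yc : Ys →ₗ[R] V)
  (Mh : Ys →ₗ[R] W) (Nh : U →ₗ[R] W) (Xh : W →ₗ[R] Ys) (Yh : W →ₗ[R] U)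

theorem eq_fst_reconstruction (g11 : M ∘ₗ X + Yh ∘ₗ Nh = LinearMap.id)
    (g12 : M ∘ₗ Yc - Yh ∘ₗ Mh = 0) (a : U) (b : Ys) :
    a = M (X a + Yc b) + -(Yh (-(Nh a) + Mh b)) := by
  have hid : M (X a) + Yh (Nh a) = a := LinearMap.congr_fun g11 a
  have hzero : M (Yc b) - Yh (Mh b) = 0 := LinearMap.congr_fun g12 b
  simp only [map_add, map_neg]
  linear_combination (norm := module) -hid - hzero

theorem eq_snd_reconstruction (g21 : N ∘ₗ X - Xh ∘ₗ Nh = 0)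
    (g22 : N ∘ₗ Yc + Xh ∘ₗ Mh = LinearMap.id) (a : U) (b : Ys) :
    b = N (X a + Yc b) + Xh (-(Nh a) + Mh b) := by
  have hzero : N (X a) - Xh (Nh a) = 0 := LinearMap.congr_fun g21 a
  have hid : N (Yc b) + Xh (Mh b) = b := LinearMap.congr_fun g22 b
  simp only [map_add, map_neg]
  linear_combination (norm := module) -hzero - hid

end Bezout

theorem stmt11_general {R : Type*} [CommRing R]
    {U Ys V W : Type*} [AddCommGroup U] [AddCommGroup Ys] [AddCommGroup V] [AddCommGroup W]
    [Module R U] [Module R Ys] [Module R V] [Module R W]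
    (M : V →ₗ[R] U) (N : V →ₗ[R] Ys) (X : U →ₗ[R] V) (Yc : Ys →ₗ[R] V)
    (Mh : Ys →ₗ[R] W) (Nh : U →ₗ[R] W) (Xh : W →ₗ[R] Ys) (Yh : W →ₗ[R] U)
    (g11 : M ∘ₗ X + Yh ∘ₗ Nh = LinearMap.id)
    (g12 : M ∘ₗ Yc - Yh ∘ₗ Mh = 0)
    (g21 : N ∘ₗ X - Xh ∘ₗ Nh = 0)
    (g22 : N ∘ₗ Yc + Xh ∘ₗ Mh = LinearMap.id) :
    ∀ (a_u : U) (a_y : Ys), X a_u - Yc a_y ≠ 0 →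
      (X a_u + Yc (-a_y) ≠ 0 ∧
       a_u = M (X a_u + Yc (-a_y)) + -(Yh (-(Nh a_u) + Mh (-a_y))) ∧
       -a_y = N (X a_u + Yc (-a_y)) + Xh (-(Nh a_u) + Mh (-a_y)) ∧
       ∀ (u : U) (y : Ys),
         X (u + a_u) + Yc (y + -a_y) = (X u + Yc y) + (X a_u + Yc (-a_y))) := by
  intro a_u a_y hact
  refine ⟨by rwa [map_neg, ← sub_eq_add_neg],
    Bezout.eq_fst_reconstruction M X Yc Mh Nh Yh g11 g12 a_u (-a_y),
    Bezout.eq_snd_reconstruction N X Yc Mh Nh Xh g21 g22 a_u (-a_y), fun u y => ?_⟩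
  simp only [map_add]
  abel

/-- Every actuable attack is detectable on the plant side: if X a_u − Y a_y ≠ 0 then
the first Bezout coordinate ξ₁ of (a_u, −a_y) is nonzero, the decomposition holds,
and the input residual shifts by exactly ξ₁. -/
theorem stmt11 {R : Type*} [CommRing R]
    {U Ys V W : Type*} [AddCommGroup U] [AddCommGroup Ys] [AddCommGroup V] [AddCommGroup W]
    [Module R U] [Module R Ys] [Module R V] [Module R W]
    (M : V →ₗ[R] U) (N : V →ₗ[R] Ys) (X : U →ₗ[R] V) (Yc : Ys →ₗ[R] V)
    (Mh : Ys →ₗ[R] W) (Nh : U →ₗ[R] W) (Xh : W →ₗ[R] Ys) (Yh : W →ₗ[R] U)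
    (h11 : X ∘ₗ M + Yc ∘ₗ N = LinearMap.id)
    (h12 : -(X ∘ₗ Yh) + Yc ∘ₗ Xh = 0)
    (h21 : -(Nh ∘ₗ M) + Mh ∘ₗ N = 0)
    (h22 : Nh ∘ₗ Yh + Mh ∘ₗ Xh = LinearMap.id)
    (g11 : M ∘ₗ X + Yh ∘ₗ Nh = LinearMap.id)
    (g12 : M ∘ₗ Yc - Yh ∘ₗ Mh = 0)
    (g21 : N ∘ₗ X - Xh ∘ₗ Nh = 0)
    (g22 : N ∘ₗ Yc + Xh ∘ₗ Mh = LinearMap.id) :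
    ∀ (a_u : U) (a_y : Ys), X a_u - Yc a_y ≠ 0 →
      (X a_u + Yc (-a_y) ≠ 0 ∧
       a_u = M (X a_u + Yc (-a_y)) + -(Yh (-(Nh a_u) + Mh (-a_y))) ∧
       -a_y = N (X a_u + Yc (-a_y)) + Xh (-(Nh a_u) + Mh (-a_y)) ∧
       ∀ (u : U) (y : Ys),
         X (u + a_u) + Yc (y + -a_y) = (X u + Yc y) + (X a_u + Yc (-a_y))) :=
  stmt11_general M N X Yc Mh Nh Xh Yh g11 g12 g21 g22
end
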